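/- Let a_n be a real sequence with a_{-1} = -1 and -1 < a_n < 1 for all n ≥ 0, and set u_n = (1+a_{n-1})(1-a_{n-2}) for n ≥ 1. If a_n = -1/(2(n+2)) - 1/(2(n+2)G_{n+1}) with G_n = Σ_{s=0}^n 1/(2s+1), then u_n = (n+1/2)²/(n(n+1)) for all n ≥ 1. -/

import Mathlib

/-- G_n = Σ_{s=0}^n 1/(2s+1). -/
noncomputable def Gsum (n : ℕ) : ℝ :=
  ∑ s ∈ Finset.range (n + 1), (1 : ℝ) / (2 * s + 1)

/-!
Since `G_{n+1} = G_n + 1/(2n+3)`, both factors telescope: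
`1 + a_n = (2n+3) G_n / (2(n+2) G_{n+1})` and `1 - a_n = (2n+5) G_{n+2} / (2(n+2) G_{n+1})`.
In `(1 + a_{n-1})(1 - a_{n-2})` the harmonic-type sums cancel, leaving `(2n+1)² / (4n(n+1))`;
the case `n = 1` uses `a_{-1} = -1` instead.
-/

lemma Gsum_pos (n : ℕ) : 0 < Gsum n :=
  Finset.sum_pos (fun _ _ => by positivity) ⟨0, by simp⟩

lemma Gsum_succ (n : ℕ) : Gsum (n + 1) = Gsum n + 1 / (2 * (n : ℝ) + 3) := by
  rw [Gsum, Finset.sum_range_succ, ← Gsum]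
  push_cast
  ring_nf

noncomputable def reflectionParam (n : ℕ) : ℝ :=
  -1 / (2 * ((n : ℝ) + 2)) - 1 / (2 * ((n : ℝ) + 2) * Gsum (n + 1))

lemma one_add_reflectionParam (n : ℕ) :
    1 + reflectionParam n = (2 * (n : ℝ) + 3) * Gsum n / (2 * ((n : ℝ) + 2) * Gsum (n + 1)) := by
  have hG : 0 < Gsum n + 1 / (2 * (n : ℝ) + 3) := Gsum_succ n ▸ Gsum_pos (n + 1)
  have := Gsum_pos n
  rw [reflectionParam, Gsum_succ]
  field_simp
  ring

lemma one_sub_reflectionParam (n : ℕ) :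
    1 - reflectionParam n
      = (2 * (n : ℝ) + 5) * Gsum (n + 2) / (2 * ((n : ℝ) + 2) * Gsum (n + 1)) := by
  have := Gsum_pos (n + 1)
  rw [reflectionParam, Gsum_succ (n + 1)]
  push_cast
  field_simp
  ring

lemma one_add_reflectionParam_zero : 1 + reflectionParam 0 = 9 / 16 := by
  rw [one_add_reflectionParam, Gsum_succ]
  norm_num [Gsum]

lemma one_add_reflectionParam_succ_mul_one_sub_reflectionParam (k : ℕ) :
    (1 + reflectionParam (k + 1)) * (1 - reflectionParam k)
      = (2 * (k : ℝ) + 5) ^ 2 / (4 * ((k : ℝ) + 2) * ((k : ℝ) + 3)) := by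
  rw [one_add_reflectionParam, one_sub_reflectionParam]
  have := Gsum_pos (k + 1)
  have := Gsum_pos (k + 2)
  push_cast
  field_simp
  ring

theorem DG_recurrence_coefficients_general (a : ℤ → ℝ)
    (ha_init : a (-1) = -1)
    (ha_form : ∀ n : ℕ, a (n : ℤ)
      = -1 / (2 * ((n : ℝ) + 2)) - 1 / (2 * ((n : ℝ) + 2) * Gsum (n + 1))) :
    ∀ n : ℕ, 1 ≤ n →
      (1 + a ((n : ℤ) - 1)) * (1 - a ((n : ℤ) - 2))
        = ((n : ℝ) + 1 / 2) ^ 2 / ((n : ℝ) * ((n : ℝ) + 1)) := by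
  have ha : ∀ n : ℕ, a n = reflectionParam n := ha_form
  rintro (_ | _ | k) hn
  · omega
  · have h := ha 0
    norm_num at h ⊢
    rw [h, ha_init, one_add_reflectionParam_zero]
    norm_num
  · have h₁ : ((k + 2 : ℕ) : ℤ) - 1 = ((k + 1 : ℕ) : ℤ) := by push_cast; ring
    have h₂ : ((k + 2 : ℕ) : ℤ) - 2 = ((k : ℕ) : ℤ) := by push_cast; ring
    rw [h₁, h₂, ha, ha, one_add_reflectionParam_succ_mul_one_sub_reflectionParam]
    push_cast
    field_simp
    ring

theorem DG_recurrence_coefficients (a : ℤ → ℝ)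
    (ha_init : a (-1) = -1)
    (ha_bound : ∀ n : ℤ, 0 ≤ n → -1 < a n ∧ a n < 1)
    (ha_form : ∀ n : ℕ, a (n : ℤ)
      = -1 / (2 * ((n : ℝ) + 2)) - 1 / (2 * ((n : ℝ) + 2) * Gsum (n + 1))) :
    ∀ n : ℕ, 1 ≤ n →
      (1 + a ((n : ℤ) - 1)) * (1 - a ((n : ℤ) - 2))
        = ((n : ℝ) + 1 / 2) ^ 2 / ((n : ℝ) * ((n : ℝ) + 1)) :=
  DG_recurrence_coefficients_general a ha_init ha_form
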